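/- arXiv:2303.11231 — 2 statements merged into one kernel-verified Lean document; each statement's English description precedes it below -/
import Mathlib

section
/- Let M be a 01*-matrix divided into two row blocks R, R' and two column blocks C, C', each of size at least two. If all four zones [R,C], [R,C'], [R',C], [R',C'] are mixed, then M contains a corner intersecting all four zones, i.e., a 2×2 mixed submatrix with one row in R, one row in R', one column in C, and one column in C'. -/
/-- 01*-matrices are matrices with entries in `Fin 3` (`2` stands for `*`). -/
def MatHorizontal {α β : Type*} (M : Matrix α β (Fin 3)) : Prop :=
  ∀ i j j', M i j = M i j'

def MatVertical {α β : Type*} (M : Matrix α β (Fin 3)) : Prop :=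
  ∀ i i' j, M i j = M i' j

/-- Mixed: neither horizontal nor vertical, or contains a `*` entry
(intended for matrices with at least 2 rows and 2 columns). -/
def MatMixed {α β : Type*} (M : Matrix α β (Fin 3)) : Prop :=
  (¬ MatHorizontal M ∧ ¬ MatVertical M) ∨ (∃ i j, M i j = 2)

lemma not_mixed_2x2 (N : Matrix (Fin 2) (Fin 2) (Fin 3)) (h : ¬ MatMixed N) :
    ((N 0 0 = N 0 1 ∧ N 1 0 = N 1 1) ∨ (N 0 0 = N 1 0 ∧ N 0 1 = N 1 1)) ∧
      ∀ i j, N i j ≠ 2 := by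
  unfold MatMixed at h
  push_neg at h
  obtain ⟨h1, h2⟩ := h
  refine ⟨?_, h2⟩
  by_cases hH : MatHorizontal N
  · exact Or.inl ⟨hH 0 0 1, hH 1 0 1⟩
  · have hV : MatVertical N := h1 hH
    exact Or.inr ⟨hV 0 1 0, hV 0 1 1⟩

/-- If a 01*-matrix is divided into two row blocks `R, R'` and two column blocks
`C, C'`, each of size at least 2 (modelled by the index types `Fin m ⊕ Fin m'`
and `Fin n ⊕ Fin n'` with `m, m', n, n' ≥ 2`), and all four zones are mixed,
then there is a corner (a mixed 2×2 submatrix) intersecting all four zones. -/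
theorem corner_meeting_all_four_zones {m m' n n' : ℕ}
    (hm : 2 ≤ m) (hm' : 2 ≤ m') (hn : 2 ≤ n) (hn' : 2 ≤ n')
    (M : Matrix (Fin m ⊕ Fin m') (Fin n ⊕ Fin n') (Fin 3))
    (hLL : MatMixed (M.submatrix (Sum.inl : Fin m → _) (Sum.inl : Fin n → _)))
    (hLR : MatMixed (M.submatrix (Sum.inl : Fin m → _) (Sum.inr : Fin n' → _)))
    (hRL : MatMixed (M.submatrix (Sum.inr : Fin m' → _) (Sum.inl : Fin n → _)))
    (hRR : MatMixed (M.submatrix (Sum.inr : Fin m' → _) (Sum.inr : Fin n' → _))) :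
    ∃ (r : Fin m) (r' : Fin m') (c : Fin n) (c' : Fin n'),
      MatMixed (M.submatrix
        (![Sum.inl r, Sum.inr r'] : Fin 2 → Fin m ⊕ Fin m')
        (![Sum.inl c, Sum.inr c'] : Fin 2 → Fin n ⊕ Fin n')) := by
  by_contra hcon
  push_neg at hcon
  -- basepoints
  have r0 : Fin m := ⟨0, by omega⟩
  have r'0 : Fin m' := ⟨0, by omega⟩
  have c0 : Fin n := ⟨0, by omega⟩
  have c'0 : Fin n' := ⟨0, by omega⟩
  -- entries of corners, rephrased
  have ent : ∀ (r : Fin m) (r' : Fin m') (c : Fin n) (c' : Fin n'),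
      ((M (Sum.inl r) (Sum.inl c) = M (Sum.inl r) (Sum.inr c') ∧
        M (Sum.inr r') (Sum.inl c) = M (Sum.inr r') (Sum.inr c')) ∨
       (M (Sum.inl r) (Sum.inl c) = M (Sum.inr r') (Sum.inl c) ∧
        M (Sum.inl r) (Sum.inr c') = M (Sum.inr r') (Sum.inr c'))) ∧
      (M (Sum.inl r) (Sum.inl c) ≠ 2 ∧ M (Sum.inl r) (Sum.inr c') ≠ 2 ∧
       M (Sum.inr r') (Sum.inl c) ≠ 2 ∧ M (Sum.inr r') (Sum.inr c') ≠ 2) := by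
    intro r r' c c'
    have h := not_mixed_2x2 _ (hcon r r' c c')
    simpa [Matrix.submatrix_apply] using
      ⟨h.1, h.2 0 0, h.2 0 1, h.2 1 0, h.2 1 1⟩
  have key := fun r r' c c' => (ent r r' c c').1
  have no2 : ∀ p q, M p q ≠ 2 := by
    rintro (i | i) (j | j)
    · exact (ent i r'0 j c'0).2.1
    · exact (ent i r'0 c0 j).2.2.1
    · exact (ent r0 i j c'0).2.2.2.1
    · exact (ent r0 i c0 j).2.2.2.2
  -- top-right zone is not vertical
  have hvLR : ¬ MatVertical (M.submatrix (Sum.inl : Fin m → _) (Sum.inr : Fin n' → _)) := by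
    rcases hLR with ⟨_, hv⟩ | ⟨i, j, h2⟩
    · exact hv
    · exact absurd h2 (no2 _ _)
  -- top-left zone is not horizontal
  have hhLL : ¬ MatHorizontal (M.submatrix (Sum.inl : Fin m → _) (Sum.inl : Fin n → _)) := by
    rcases hLL with ⟨hh, _⟩ | ⟨i, j, h2⟩
    · exact hh
    · exact absurd h2 (no2 _ _)
  unfold MatVertical at hvLR
  push_neg at hvLR
  obtain ⟨r1, r2, cs, hsplit⟩ := hvLR
  simp only [Matrix.submatrix_apply] at hsplit
  -- find r ∈ R with M (inl r) (inr cs) ≠ M (inr r'0) (inr cs)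
  have hx : ∃ r : Fin m, M (Sum.inl r) (Sum.inr cs) ≠ M (Sum.inr r'0) (Sum.inr cs) := by
    by_cases h1 : M (Sum.inl r1) (Sum.inr cs) = M (Sum.inr r'0) (Sum.inr cs)
    · exact ⟨r2, fun h => hsplit (h1 ▸ h ▸ rfl)⟩
    · exact ⟨r1, h1⟩
  obtain ⟨r, hx⟩ := hx
  -- row r and row r'0 are constant on C with distinct values
  have claim1 : ∀ c : Fin n,
      M (Sum.inl r) (Sum.inl c) = M (Sum.inl r) (Sum.inr cs) ∧
      M (Sum.inr r'0) (Sum.inl c) = M (Sum.inr r'0) (Sum.inr cs) := by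
    intro c
    rcases key r r'0 c cs with h | ⟨_, h2⟩
    · exact h
    · exact absurd h2 hx
  -- row r and row r'0 are constant on C' as well
  have claim2 : ∀ c' : Fin n',
      M (Sum.inl r) (Sum.inr c') = M (Sum.inl r) (Sum.inr cs) ∧
      M (Sum.inr r'0) (Sum.inr c') = M (Sum.inr r'0) (Sum.inr cs) := by
    intro c'
    rcases key r r'0 c0 c' with ⟨h1, h2⟩ | ⟨h1, _⟩
    · exact ⟨h1 ▸ (claim1 c0).1 ▸ rfl, h2 ▸ (claim1 c0).2 ▸ rfl⟩
    · exact absurd ((claim1 c0).1.symm.trans (h1.trans (claim1 c0).2)) hx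
  have rowr : ∀ q, M (Sum.inl r) q = M (Sum.inl r) (Sum.inr cs) := by
    rintro (j | j)
    · exact (claim1 j).1
    · exact (claim2 j).1
  have rowr' : ∀ q, M (Sum.inr r'0) q = M (Sum.inr r'0) (Sum.inr cs) := by
    rintro (j | j)
    · exact (claim1 j).2
    · exact (claim2 j).2
  -- now use that the top-left zone is not horizontal
  unfold MatHorizontal at hhLL
  push_neg at hhLL
  obtain ⟨r3, c1, c2, hne⟩ := hhLL
  simp only [Matrix.submatrix_apply] at hne
  have eqc : ∀ c : Fin n, M (Sum.inl r3) (Sum.inl c) = M (Sum.inl r3) (Sum.inr c'0) := by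
    intro c
    rcases key r3 r'0 c c'0 with ⟨h1, _⟩ | ⟨h1, h2⟩
    · exact h1
    · rw [h1, h2, rowr' (Sum.inl c), rowr' (Sum.inr c'0)]
  exact hne ((eqc c1).trans (eqc c2).symm)
end

section
/- Let M be a 01*-matrix with two row blocks R, R' and two column blocks C, C'. Let M' be the 2×2 matrix obtained by contracting each of the four zones to a single entry, taking the maximum value of the zone under the order 0 < 1 < *. If M' is mixed, then M is mixed. -/
/-- The maximum entry of the zone of `M` with rows selected by `f` and
columns selected by `g`, under the order `0 < 1 < 2 = *`. -/
noncomputable def zoneSup {α β : Type*} {a b : ℕ} (M : Matrix α β (Fin 3))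
    (f : Fin (a + 1) → α) (g : Fin (b + 1) → β) : Fin 3 :=
  Finset.univ.sup' Finset.univ_nonempty
    (fun p : Fin (a + 1) × Fin (b + 1) => M (f p.1) (g p.2))

/-- The contraction `M/{R,R';C,C'}` of a matrix with two (nonempty) row blocks
and two (nonempty) column blocks: each zone is replaced by its maximum entry. -/
noncomputable def contraction {m m' n n' : ℕ}
    (M : Matrix (Fin (m + 1) ⊕ Fin (m' + 1)) (Fin (n + 1) ⊕ Fin (n' + 1)) (Fin 3)) :
    Matrix (Fin 2) (Fin 2) (Fin 3) :=
  Matrix.of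
    ![![zoneSup M Sum.inl Sum.inl, zoneSup M Sum.inl Sum.inr],
      ![zoneSup M Sum.inr Sum.inl, zoneSup M Sum.inr Sum.inr]]

lemma zoneSup_exists {α β : Type*} {a b : ℕ} (M : Matrix α β (Fin 3))
    (f : Fin (a + 1) → α) (g : Fin (b + 1) → β) :
    ∃ p : Fin (a + 1) × Fin (b + 1), M (f p.1) (g p.2) = zoneSup M f g := by
  obtain ⟨p, -, hp⟩ := Finset.exists_mem_eq_sup' (Finset.univ_nonempty)
    (fun p : Fin (a + 1) × Fin (b + 1) => M (f p.1) (g p.2))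
  exact ⟨p, hp.symm⟩

lemma zoneSup_congr_g {α β : Type*} {a b b' : ℕ} (M : Matrix α β (Fin 3))
    (f : Fin (a + 1) → α) (g : Fin (b + 1) → β) (g' : Fin (b' + 1) → β)
    (hM : MatHorizontal M) : zoneSup M f g = zoneSup M f g' := by
  unfold zoneSup
  apply le_antisymm
  · apply Finset.sup'_le
    intro p _
    rw [hM (f p.1) (g p.2) (g' 0)]
    exact Finset.le_sup' (fun q : Fin (a + 1) × Fin (b' + 1) => M (f q.1) (g' q.2))
      (Finset.mem_univ (p.1, (0 : Fin (b' + 1))))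
  · apply Finset.sup'_le
    intro p _
    rw [hM (f p.1) (g' p.2) (g 0)]
    exact Finset.le_sup' (fun q : Fin (a + 1) × Fin (b + 1) => M (f q.1) (g q.2))
      (Finset.mem_univ (p.1, (0 : Fin (b + 1))))

lemma zoneSup_congr_f {α β : Type*} {a a' b : ℕ} (M : Matrix α β (Fin 3))
    (f : Fin (a + 1) → α) (f' : Fin (a' + 1) → α) (g : Fin (b + 1) → β)
    (hM : MatVertical M) : zoneSup M f g = zoneSup M f' g := by
  unfold zoneSup
  apply le_antisymm
  · apply Finset.sup'_le
    intro p _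
    rw [hM (f p.1) (f' 0) (g p.2)]
    exact Finset.le_sup' (fun q : Fin (a' + 1) × Fin (b + 1) => M (f' q.1) (g q.2))
      (Finset.mem_univ ((0 : Fin (a' + 1)), p.2))
  · apply Finset.sup'_le
    intro p _
    rw [hM (f' p.1) (f 0) (g p.2)]
    exact Finset.le_sup' (fun q : Fin (a + 1) × Fin (b + 1) => M (f q.1) (g q.2))
      (Finset.mem_univ ((0 : Fin (a + 1)), p.2))

set_option maxHeartbeats 1600000 in
/-- If the contraction `M'` of `M` is mixed then `M` is mixed. -/
theorem mixed_of_contraction_mixed {m m' n n' : ℕ}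
    (M : Matrix (Fin (m + 1) ⊕ Fin (m' + 1)) (Fin (n + 1) ⊕ Fin (n' + 1)) (Fin 3))
    (h : MatMixed (contraction M)) : MatMixed M := by
  rcases h with ⟨hH, hV⟩ | ⟨i, j, hij⟩
  · left
    constructor
    · intro hM
      apply hH
      intro i j j'
      fin_cases i <;> fin_cases j <;> fin_cases j' <;>
        first
          | rfl
          | exact zoneSup_congr_g M _ _ _ hM
    · intro hM
      apply hV
      intro i i' j
      fin_cases i <;> fin_cases i' <;> fin_cases j <;>
        first
          | rfl
          | exact zoneSup_congr_f M _ _ _ hM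
  · right
    fin_cases i <;> fin_cases j <;>
      [ (obtain ⟨p, hp⟩ := zoneSup_exists M Sum.inl Sum.inl);
        (obtain ⟨p, hp⟩ := zoneSup_exists M Sum.inl Sum.inr);
        (obtain ⟨p, hp⟩ := zoneSup_exists M Sum.inr Sum.inl);
        (obtain ⟨p, hp⟩ := zoneSup_exists M Sum.inr Sum.inr)] <;>
      exact ⟨_, _, hp.trans hij⟩
end
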